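/- Let V̂ = V − α(I−γP^π)^{−1} d + (I−γP^π)^{−1} e, where d is the vector d(s) = E_{a∼π(·|s)}[π(a|s)/π_β(a|s) − (1+δ(s))] with all entries strictly positive, and e is the vector with constant entry C·R_max/((1−γ)√|D(s)|). If α > max_s [C·R_max/((1−γ)√|D(s)|)] / min_s d(s), then V̂(s) ≤ V(s) for all s. -/

import Mathlib

theorem alpha_condition_implies_lower_bound
    {S : Type*} [Fintype S] [DecidableEq S] [Nonempty S]
    (P : Matrix S S ℝ) (hP0 : ∀ i j, 0 ≤ P i j) (hP1 : ∀ i, ∑ j, P i j = 1)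
    (γ : ℝ) (hγ0 : 0 ≤ γ) (hγ1 : γ < 1)
    (C Rmax : ℝ) (hC : 0 < C) (hR : 0 < Rmax)
    (Dcount : S → ℝ) (hD : ∀ s, 1 ≤ Dcount s)
    (d : S → ℝ) (hd : ∀ s, 0 < d s)
    (V : S → ℝ) (α : ℝ)
    (e : S → ℝ) (he : ∀ s, e s = C * Rmax / ((1 - γ) * Real.sqrt (Dcount s)))
    (Vhat : S → ℝ)
    (hVhat : Vhat = fun s =>
      V s - α * (∑' t : ℕ, γ ^ t • P ^ t).mulVec d s
        + (∑' t : ℕ, γ ^ t • P ^ t).mulVec e s)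
    (hα : (⨆ s, C * Rmax / ((1 - γ) * Real.sqrt (Dcount s))) / (⨅ s, d s) < α) :
    ∀ s, Vhat s ≤ V s := by
  subst hVhat
  -- entries of P^t are nonneg
  have hPt0 : ∀ t : ℕ, ∀ i j, 0 ≤ (P ^ t) i j := by
    intro t
    induction t with
    | zero =>
      intro i j
      by_cases h : i = j <;> simp [pow_zero, Matrix.one_apply, h]
    | succ n ih =>
      intro i j
      rw [pow_succ, Matrix.mul_apply]
      exact Finset.sum_nonneg fun k _ => mul_nonneg (ih i k) (hP0 k j)
  -- row sums of P^t are 1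
  have hPt1 : ∀ t : ℕ, ∀ i, ∑ j, (P ^ t) i j = 1 := by
    intro t
    induction t with
    | zero =>
      intro i
      simp [pow_zero, Matrix.one_apply]
    | succ n ih =>
      intro i
      simp only [pow_succ, Matrix.mul_apply]
      rw [Finset.sum_comm]
      calc ∑ k, ∑ j, (P ^ n) i k * P k j
          = ∑ k, (P ^ n) i k * ∑ j, P k j := by
            simp [Finset.mul_sum]
        _ = 1 := by simp [hP1, ih i]
  have hPtle : ∀ t : ℕ, ∀ i j, (P ^ t) i j ≤ 1 := by
    intro t i j
    calc (P ^ t) i j ≤ ∑ j', (P ^ t) i j' :=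
      Finset.single_le_sum (fun k _ => hPt0 t i k) (Finset.mem_univ j)
      _ = 1 := hPt1 t i
  -- summability of entries
  have hsum : ∀ i j, Summable (fun t : ℕ => γ ^ t * (P ^ t) i j) := by
    intro i j
    refine Summable.of_nonneg_of_le
      (fun t => mul_nonneg (pow_nonneg hγ0 t) (hPt0 t i j))
      (fun t => ?_) (summable_geometric_of_lt_one hγ0 hγ1)
    calc γ ^ t * (P ^ t) i j ≤ γ ^ t * 1 :=
      mul_le_mul_of_nonneg_left (hPtle t i j) (pow_nonneg hγ0 t)
      _ = γ ^ t := mul_one _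
  have hS : Summable (fun t : ℕ => γ ^ t • P ^ t) := by
    refine (Pi.summable (f := fun t : ℕ => (γ ^ t • P ^ t : S → S → ℝ))).2 ?_
    intro i
    rw [Pi.summable]
    intro j
    simpa [Matrix.smul_apply, smul_eq_mul] using hsum i j
  set M : Matrix S S ℝ := ∑' t : ℕ, γ ^ t • P ^ t with hMdef
  have hM : ∀ i j, M i j = ∑' t : ℕ, γ ^ t * (P ^ t) i j := by
    intro i j
    have h1 : (∑' t : ℕ, γ ^ t • P ^ t) i = ∑' t : ℕ, (γ ^ t • P ^ t) i :=
      tsum_apply (f := fun t : ℕ => (γ ^ t • P ^ t : S → S → ℝ)) hS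
    have h2 : (∑' t : ℕ, (γ ^ t • P ^ t) i) j = ∑' t : ℕ, (γ ^ t • P ^ t) i j :=
      tsum_apply ((Pi.summable (f := fun t : ℕ => (γ ^ t • P ^ t : S → S → ℝ))).1 hS i)
    rw [hMdef, h1, h2]
    simp [Matrix.smul_apply, smul_eq_mul]
  have hM0 : ∀ i j, 0 ≤ M i j := by
    intro i j
    rw [hM]
    exact tsum_nonneg fun t => mul_nonneg (pow_nonneg hγ0 t) (hPt0 t i j)
  -- e s ≤ α * d s
  have hinf : ∃ s0 : S, ∀ s, d s0 ≤ d s := Finite.exists_min d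
  obtain ⟨s0, hs0⟩ := hinf
  have hinf_pos : 0 < ⨅ s, d s := lt_of_lt_of_le (hd s0) (le_ciInf hs0)
  have hbdd : BddAbove (Set.range fun s => C * Rmax / ((1 - γ) * Real.sqrt (Dcount s))) :=
    Set.Finite.bddAbove (Set.finite_range _)
  have hkey : ∀ s, e s ≤ α * d s := by
    intro s
    have h1 : e s ≤ ⨆ s', C * Rmax / ((1 - γ) * Real.sqrt (Dcount s')) := by
      rw [he s]; exact le_ciSup hbdd s
    have h2 : (⨆ s', C * Rmax / ((1 - γ) * Real.sqrt (Dcount s'))) < α * ⨅ s', d s' :=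
      (div_lt_iff₀ hinf_pos).1 hα
    have h3 : (⨅ s', d s') ≤ d s := ciInf_le (Finite.bddBelow_range d) s
    have hα0 : 0 < α := by
      have hsup0 : 0 < ⨆ s', C * Rmax / ((1 - γ) * Real.sqrt (Dcount s')) := by
        refine lt_of_lt_of_le ?_ (le_ciSup hbdd s)
        have h1 : 0 < Real.sqrt (Dcount s) := Real.sqrt_pos.2 (lt_of_lt_of_le one_pos (hD s))
        have h2 : 0 < 1 - γ := by linarith
        positivity
      nlinarith [hinf_pos]
    nlinarith [mul_le_mul_of_nonneg_left h3 hα0.le]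
  -- conclude
  intro s
  have hle : M.mulVec e s ≤ α * M.mulVec d s := by
    simp only [Matrix.mulVec, dotProduct]
    rw [Finset.mul_sum]
    refine Finset.sum_le_sum fun j _ => ?_
    calc M s j * e j ≤ M s j * (α * d j) :=
      mul_le_mul_of_nonneg_left (hkey j) (hM0 s j)
      _ = α * (M s j * d j) := by ring
  simp only
  linarith [hle]
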